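/- arXiv:2004.00586 — 3 statements merged into one kernel-verified Lean document; each statement's English description precedes it below -/
import Mathlib

section
/- Let A, B ∈ GL_n(ℤ) be hyperbolic (no eigenvalues of absolute value 1). If Φ: ℤⁿ ⋊_A ℤ → ℤⁿ ⋊_B ℤ is a group isomorphism, then Φ maps the subgroup ℤⁿ × {0} onto ℤⁿ × {0}. -/
/-- The additive automorphism of `ℤⁿ` induced by a matrix `A ∈ GL_n(ℤ)`. -/
def glToAddAut {n : ℕ} (A : Matrix.GeneralLinearGroup (Fin n) ℤ) : AddAut (Fin n → ℤ) where
  toFun v := (A : Matrix (Fin n) (Fin n) ℤ).mulVec v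
  invFun v := ((A⁻¹ : Matrix.GeneralLinearGroup (Fin n) ℤ) : Matrix (Fin n) (Fin n) ℤ).mulVec v
  left_inv v := by
    simp only [Matrix.mulVec_mulVec]
    simp
  right_inv v := by
    simp only [Matrix.mulVec_mulVec]
    simp
  map_add' x y := Matrix.mulVec_add _ x y

/-- The action of `ℤ` on `ℤⁿ` given by powers of `A`. -/
def glPhi {n : ℕ} (A : Matrix.GeneralLinearGroup (Fin n) ℤ) :
    Multiplicative ℤ →* MulAut (Multiplicative (Fin n → ℤ)) :=
  zpowersHom _ (AddEquiv.toMultiplicative (glToAddAut A))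

/-- The group `ℤⁿ ⋊_A ℤ`, with multiplication `(x,i)(y,j) = (x + Aⁱ y, i + j)`. -/
abbrev Gamma {n : ℕ} (A : Matrix.GeneralLinearGroup (Fin n) ℤ) :=
  Multiplicative (Fin n → ℤ) ⋊[glPhi A] Multiplicative ℤ

/-- `A ∈ GL_n(ℤ)` is hyperbolic if no complex eigenvalue has absolute value 1. -/
def IsHyperbolic {n : ℕ} (A : Matrix.GeneralLinearGroup (Fin n) ℤ) : Prop :=
  ∀ μ : ℂ, ((A : Matrix (Fin n) (Fin n) ℤ).map (Int.cast : ℤ → ℂ)).charpoly.IsRoot μ →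
    ‖μ‖ ≠ 1

/-! The subgroup `ℤⁿ × {0}` is intrinsic: it consists exactly of the elements with a nonzero
power in the commutator subgroup. The commutator of `(y, 0)` and `(0, 1)` is `((1 - A) y, 0)`, so
the commutator subgroup contains `det (1 - A) • ℤⁿ`, and `det (1 - A) ≠ 0` because `1` is not an
eigenvalue of the hyperbolic matrix `A`. Conversely, the projection to the torsion-free abelian
group `ℤ` kills all commutators. -/

open SemidirectProduct Matrix
open scoped commutatorElement

def commutatorIsolator (G : Type*) [Group G] : Set G :=
  {g | ∃ k : ℤ, k ≠ 0 ∧ g ^ k ∈ commutator G}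

lemma MulEquiv.map_commutator {G H : Type*} [Group G] [Group H] (Φ : G ≃* H) :
    (commutator G).map Φ.toMonoidHom = commutator H := by
  rw [map_commutator_eq, MonoidHom.range_eq_top.mpr Φ.surjective, commutator_def]

lemma MulEquiv.preimage_commutatorIsolator {G H : Type*} [Group G] [Group H] (Φ : G ≃* H) :
    Φ ⁻¹' commutatorIsolator H = commutatorIsolator G := by
  ext g
  simp only [commutatorIsolator, Set.mem_preimage, Set.mem_ofPred_eq, ← Φ.map_commutator,
    Subgroup.mem_map_equiv, ← map_zpow, symm_apply_apply]

lemma commutatorIsolator_subset_ker {G H : Type*} [Group G] [CommGroup H] [IsMulTorsionFree H]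
    (f : G →* H) : commutatorIsolator G ⊆ f.ker := by
  rintro g ⟨k, hk, hgk⟩
  rw [SetLike.mem_coe, MonoidHom.mem_ker, ← IsMulTorsionFree.zpow_eq_one_iff_left hk, ← map_zpow]
  exact Abelianization.commutator_subset_ker f hgk

lemma IsHyperbolic.det_one_sub_ne_zero {n : ℕ} {A : GL (Fin n) ℤ} (hA : IsHyperbolic A) :
    (1 - (A : Matrix (Fin n) (Fin n) ℤ)).det ≠ 0 := by
  intro h
  refine hA 1 ?_ (by simp)
  change ((A : Matrix (Fin n) (Fin n) ℤ).map (Int.castRingHom ℂ)).charpoly.eval 1 = 0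
  rw [charpoly_map, Polynomial.eval_one_map, eval_charpoly, map_one, h, map_zero]

lemma commutatorElement_inl_inr_one {n : ℕ} (A : GL (Fin n) ℤ) (y : Fin n → ℤ) :
    ⁅(inl (Multiplicative.ofAdd y) : Gamma A), (inr (Multiplicative.ofAdd (1 : ℤ)) : Gamma A)⁆
      = inl (Multiplicative.ofAdd ((1 - (A : Matrix (Fin n) (Fin n) ℤ)) *ᵥ y)) := by
  rw [commutatorElement_def, ← map_inv inl, ← map_inv inr, mul_assoc, mul_assoc,
    ← mul_assoc (inr _), ← inl_aut, ← map_mul]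
  congr 1
  simp [glPhi, glToAddAut, sub_mulVec, mulVec_neg, div_eq_mul_inv]

lemma range_inl_subset_commutatorIsolator {n : ℕ} {A : GL (Fin n) ℤ}
    (hA : (1 - (A : Matrix (Fin n) (Fin n) ℤ)).det ≠ 0) :
    ((inl : Multiplicative (Fin n → ℤ) →* Gamma A).range : Set (Gamma A)) ⊆
      commutatorIsolator (Gamma A) := by
  rintro _ ⟨x, rfl⟩
  set M := 1 - (A : Matrix (Fin n) (Fin n) ℤ)
  refine ⟨M.det, hA, ?_⟩
  have hdet : M.det • x.toAdd = M *ᵥ (M.adjugate *ᵥ x.toAdd) := by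
    rw [mulVec_mulVec, mul_adjugate, smul_mulVec, one_mulVec]
  rw [← ofAdd_toAdd x, ← map_zpow, ← ofAdd_zsmul, hdet, ← commutatorElement_inl_inr_one]
  exact Subgroup.commutator_mem_commutator (Subgroup.mem_top _) (Subgroup.mem_top _)

lemma range_inl_eq_commutatorIsolator {n : ℕ} {A : GL (Fin n) ℤ}
    (hA : (1 - (A : Matrix (Fin n) (Fin n) ℤ)).det ≠ 0) :
    ((inl : Multiplicative (Fin n → ℤ) →* Gamma A).range : Set (Gamma A)) =
      commutatorIsolator (Gamma A) := by
  refine (range_inl_subset_commutatorIsolator hA).antisymm ?_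
  rw [range_inl_eq_ker_rightHom]
  exact commutatorIsolator_subset_ker rightHom

/-- Any isomorphism `ℤⁿ ⋊_A ℤ → ℤⁿ ⋊_B ℤ` between such groups with `A, B` hyperbolic
maps the subgroup `ℤⁿ × {0}` onto `ℤⁿ × {0}`. -/
theorem iso_maps_lattice_to_lattice {n : ℕ} (A B : Matrix.GeneralLinearGroup (Fin n) ℤ)
    (hA : IsHyperbolic A) (hB : IsHyperbolic B) (Φ : Gamma A ≃* Gamma B) :
    Subgroup.map Φ.toMonoidHom
        (SemidirectProduct.inl : Multiplicative (Fin n → ℤ) →* Gamma A).range =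
      (SemidirectProduct.inl : Multiplicative (Fin n → ℤ) →* Gamma B).range := by
  rw [Subgroup.map_equiv_eq_comap_symm']
  apply SetLike.coe_injective
  rw [Subgroup.coe_comap, range_inl_eq_commutatorIsolator hA.det_one_sub_ne_zero,
    range_inl_eq_commutatorIsolator hB.det_one_sub_ne_zero]
  exact Φ.symm.preimage_commutatorIsolator
end

section
/- Let A, B ∈ GL_n(ℤ) be hyperbolic. Then ℤⁿ ⋊_A ℤ ≅ ℤⁿ ⋊_B ℤ if and only if A is conjugate in GL_n(ℤ) to B or to B⁻¹. -/
open SemidirectProduct Multiplicative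

namespace SemidirectProduct

lemma eq_inl_left_of_right_eq_one {N G : Type*} [Group N] [Group G] {φ : G →* MulAut N}
    {x : N ⋊[φ] G} (hx : x.right = 1) : x = inl x.left := by
  ext <;> simp [hx]

variable {N G : Type*} [CommGroup N] [Group G] {φ : G →* MulAut N}

lemma commute_inl_iff (g : N ⋊[φ] G) (n : N) : Commute g (inl n) ↔ φ g.right n = n := by
  rw [Commute, SemiconjBy, SemidirectProduct.ext_iff]
  simp [mul_comm n]

lemma inl_mul_mul_inv_inl (n : N) (g : N ⋊[φ] G) :
    inl n * g * (inl n)⁻¹ = inl (n * (φ g.right n)⁻¹) * g := by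
  ext <;> simp [mul_assoc, mul_comm]

lemma right_eq_one_iff_forall_commute_conj [Nontrivial N]
    (hφ : ∀ k ≠ 1, ∀ x : N, φ k x = x → x = 1) (g : N ⋊[φ] G) :
    g.right = 1 ↔ ∀ h, Commute g (h * g * h⁻¹) := by
  refine ⟨fun hg h ↦ ?_, fun hcomm ↦ ?_⟩
  · rw [eq_inl_left_of_right_eq_one hg, eq_inl_left_of_right_eq_one (x := h * _ * h⁻¹) (by simp)]
    exact (Commute.all _ _).map inl
  · by_contra hg
    obtain ⟨y, hy⟩ := exists_ne (1 : N)
    have h1 : Commute g (inl (y * (φ g.right y)⁻¹)) := by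
      have := (hcomm (inl y)).mul_right (Commute.refl g).inv_right
      rwa [inl_mul_mul_inv_inl, mul_inv_cancel_right] at this
    have h2 := hφ _ hg _ ((commute_inl_iff g _).mp h1)
    exact hy (hφ _ hg _ (mul_inv_eq_one.mp h2).symm)

end SemidirectProduct

namespace MulEquiv

lemma forall_commute_conj_iff {G H : Type*} [Group G] [Group H] (e : G ≃* H) (g : G) :
    (∀ h, Commute (e g) (h * e g * h⁻¹)) ↔ ∀ h, Commute g (h * g * h⁻¹) := by
  simp only [e.surjective.forall, ← map_inv, ← map_mul, commute_map_iff e.injective]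

variable {N G N' G' : Type*} [Group N] [Group G] [Group N'] [Group G']
  {φ : G →* MulAut N} {ψ : G' →* MulAut N'} (e : N ⋊[φ] G ≃* N' ⋊[ψ] G')

def semidirectRight : G →* G' := rightHom.comp (e.toMonoidHom.comp inr)

variable {e} (he : ∀ g, (e g).right = 1 ↔ g.right = 1)
include he

lemma right_apply_eq_semidirectRight (x : N ⋊[φ] G) : (e x).right = e.semidirectRight x.right := by
  conv_lhs => rw [← inl_left_mul_inr_right x]
  rw [map_mul, mul_right, (he _).mpr (right_inl _), one_mul]
  rfl

lemma semidirectRight_surjective : Function.Surjective e.semidirectRight := fun g' ↦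
  ⟨(e.symm (inr g')).right, by
    rw [← right_apply_eq_semidirectRight he, apply_symm_apply, right_inr]⟩

noncomputable def semidirectLeft : N ≃* N' := by
  have hinl (n : N) : e (inl n) = inl (e (inl n)).left :=
    eq_inl_left_of_right_eq_one ((he _).mpr (right_inl n))
  refine MulEquiv.ofBijective (MonoidHom.mk' (fun n ↦ (e (inl n)).left) fun m n ↦ ?_) ⟨?_, ?_⟩
  · rw [map_mul, map_mul, mul_left, (he _).mpr (right_inl m), map_one, MulAut.one_apply]
  · intro m n h
    apply inl_injective (φ := φ)
    apply e.injective
    rw [hinl m, hinl n]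
    exact congrArg inl h
  · intro n'
    have hright : (e.symm (inl n')).right = 1 := (he _).mp (by rw [apply_symm_apply, right_inl])
    refine ⟨(e.symm (inl n')).left, ?_⟩
    change (e (inl _)).left = n'
    rw [← eq_inl_left_of_right_eq_one hright, apply_symm_apply, left_inl]

lemma apply_inl (n : N) : e (inl n) = inl (semidirectLeft he n) :=
  eq_inl_left_of_right_eq_one ((he _).mpr (right_inl n))

lemma semidirectLeft_aut (g : G) (n : N) :
    semidirectLeft he (φ g n) =
      (e (inr g)).left * ψ (e.semidirectRight g) (semidirectLeft he n) * (e (inr g)).left⁻¹ := by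
  apply inl_injective (φ := ψ)
  set a := (e (inr g)).left
  have hg : e (inr g) = inl a * inr (e.semidirectRight g) := (inl_left_mul_inr_right _).symm
  rw [← apply_inl he, inl_aut, map_inv, map_mul, map_mul, map_inv, apply_inl he, hg, map_mul,
    map_mul, map_inv, inl_aut]
  simp only [mul_inv_rev, map_inv, mul_assoc]

end MulEquiv

lemma MonoidHom.toAdd_map_ofAdd_one_eq_one_or_neg_one {σ : Multiplicative ℤ →* Multiplicative ℤ}
    (hσ : Function.Surjective σ) :
    (σ (ofAdd 1)).toAdd = 1 ∨ (σ (ofAdd 1)).toAdd = -1 := by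
  obtain ⟨k, hk⟩ := hσ (ofAdd 1)
  have : σ k = σ (ofAdd 1) ^ k.toAdd := by
    rw [← map_zpow, ← ofAdd_zsmul, smul_eq_mul, mul_one, ofAdd_toAdd]
  rw [this] at hk
  exact Int.eq_one_or_neg_one_of_mul_eq_one (by simpa [mul_comm] using congrArg toAdd hk)

section

open scoped Matrix

variable {n : ℕ}

def glMulAut : GL (Fin n) ℤ →* MulAut (Multiplicative (Fin n → ℤ)) where
  toFun A := AddEquiv.toMultiplicative (glToAddAut A)
  map_one' := by ext; simp [glToAddAut]
  map_mul' A B := by ext; simp [glToAddAut, Matrix.mulVec_mulVec]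

lemma glMulAut_apply (A : GL (Fin n) ℤ) (x : Multiplicative (Fin n → ℤ)) :
    glMulAut A x = ofAdd ((A : Matrix (Fin n) (Fin n) ℤ) *ᵥ x.toAdd) := rfl

lemma glMulAut_bijective : Function.Bijective (glMulAut (n := n)) := by
  refine ⟨fun A B h ↦ Matrix.GeneralLinearGroup.toLin.injective (Units.ext (LinearMap.ext fun v ↦
    congrArg toAdd (DFunLike.congr_fun h (ofAdd v)))), fun f ↦ ?_⟩
  · let L : (Fin n → ℤ) ≃ₗ[ℤ] (Fin n → ℤ) := (AddEquiv.toMultiplicative.symm f).toIntLinearEquiv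
    have hL := Matrix.GeneralLinearGroup.toLin.apply_symm_apply
      ((LinearMap.GeneralLinearGroup.generalLinearEquiv ℤ _).symm L)
    exact ⟨_, MulEquiv.ext fun x ↦
      congrArg ofAdd (LinearMap.congr_fun (congrArg Units.val hL) x.toAdd)⟩

lemma glPhi_eq_glMulAut (A : GL (Fin n) ℤ) (k : Multiplicative ℤ) :
    glPhi A k = glMulAut (A ^ k.toAdd) := by
  rw [map_zpow]; rfl

namespace IsHyperbolic

variable {A : GL (Fin n) ℤ}

lemma eq_zero_of_pow_mulVec_eq_self (hA : IsHyperbolic A)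
    {m : ℕ} (hm : m ≠ 0) {v : Fin n → ℤ} (hv : (A : Matrix (Fin n) (Fin n) ℤ) ^ m *ᵥ v = v) :
    v = 0 := by
  by_contra hv0
  set M := (A : Matrix (Fin n) (Fin n) ℤ).map (Int.cast : ℤ → ℂ)
  have hdet : (1 - (A : Matrix (Fin n) (Fin n) ℤ) ^ m).det = 0 :=
    Matrix.exists_mulVec_eq_zero_iff.mp
      ⟨v, hv0, by rw [Matrix.sub_mulVec, hv, Matrix.one_mulVec, sub_self]⟩
  have h1 : (1 : ℂ) ∈ spectrum ℂ (M ^ m) := by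
    rw [spectrum.mem_iff, map_one, Matrix.isUnit_iff_isUnit_det, isUnit_iff_ne_zero, not_not]
    have : 1 - M ^ m = (Int.castRingHom ℂ).mapMatrix (1 - (A : Matrix (Fin n) (Fin n) ℤ) ^ m) := by
      rw [map_sub, map_one, map_pow]; rfl
    rw [this, ← RingHom.map_det, hdet, map_zero]
  obtain ⟨μ, hμ, hμm : μ ^ m = 1⟩ := (spectrum.map_pow_of_pos M (Nat.pos_of_ne_zero hm)).le h1
  refine hA μ (Matrix.mem_spectrum_iff_isRoot_charpoly.mp hμ) ?_
  rw [← pow_eq_one_iff_of_nonneg (norm_nonneg μ) hm, ← norm_pow, hμm, norm_one]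

lemma eq_zero_of_zpow_mulVec_eq_self (hA : IsHyperbolic A)
    {i : ℤ} (hi : i ≠ 0) {v : Fin n → ℤ} (hv : ((A ^ i : GL (Fin n) ℤ) : Matrix _ _ ℤ) *ᵥ v = v) :
    v = 0 := by
  refine hA.eq_zero_of_pow_mulVec_eq_self (Int.natAbs_ne_zero.mpr hi) ?_
  rw [← Units.val_pow_eq_pow_val]
  rcases Int.natAbs_eq i with h | h
  · rwa [h, zpow_natCast] at hv
  · rw [h, zpow_neg, zpow_natCast] at hv
    nth_rw 1 [← hv]
    rw [Matrix.mulVec_mulVec, ← Units.val_mul, mul_inv_cancel, Units.val_one, Matrix.one_mulVec]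

lemma eq_one_of_glPhi_apply_eq_self (hA : IsHyperbolic A) {k : Multiplicative ℤ} (hk : k ≠ 1)
    {x : Multiplicative (Fin n → ℤ)} (hx : glPhi A k x = x) : x = 1 := by
  rw [glPhi_eq_glMulAut, glMulAut_apply] at hx
  exact congrArg ofAdd (hA.eq_zero_of_zpow_mulVec_eq_self hk (congrArg toAdd hx))

end IsHyperbolic

namespace Gamma

def mulEquivOfConj {A B C : GL (Fin n) ℤ} (h : C * A * C⁻¹ = B) : Gamma A ≃* Gamma B :=
  SemidirectProduct.congr (glMulAut C) (MulEquiv.refl _) fun k ↦ by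
    rw [glPhi_eq_glMulAut, glPhi_eq_glMulAut, ← h, conj_zpow, MulEquiv.refl_apply,
      ← MulAut.mul_def, ← MulAut.mul_def, ← map_mul, ← map_mul]
    group

def mulEquivInv (A : GL (Fin n) ℤ) : Gamma A⁻¹ ≃* Gamma A :=
  SemidirectProduct.congr (MulEquiv.refl _) (MulEquiv.inv _) fun k ↦ by
    ext1 x
    simp [glPhi_eq_glMulAut]

lemma right_apply_eq_one_iff {A B : GL (Fin n) ℤ} (hA : IsHyperbolic A) (hB : IsHyperbolic B)
    (hn : n ≠ 0) (e : Gamma A ≃* Gamma B) (g : Gamma A) : (e g).right = 1 ↔ g.right = 1 := by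
  have : Nonempty (Fin n) := Fin.pos_iff_nonempty.mp (Nat.pos_of_ne_zero hn)
  rw [right_eq_one_iff_forall_commute_conj (fun _ hk _ ↦ hB.eq_one_of_glPhi_apply_eq_self hk),
    right_eq_one_iff_forall_commute_conj (fun _ hk _ ↦ hA.eq_one_of_glPhi_apply_eq_self hk),
    e.forall_commute_conj_iff]

lemma exists_conj_of_mulEquiv {A B : GL (Fin n) ℤ} (hA : IsHyperbolic A) (hB : IsHyperbolic B)
    (hn : n ≠ 0) (e : Gamma A ≃* Gamma B) :
    ∃ C : GL (Fin n) ℤ, C * A * C⁻¹ = B ∨ C * A * C⁻¹ = B⁻¹ := by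
  have he := right_apply_eq_one_iff hA hB hn e
  obtain ⟨C, hC⟩ := glMulAut_bijective.2 (e.semidirectLeft he)
  have hCA : C * A = B ^ (e.semidirectRight (ofAdd 1)).toAdd * C := by
    apply glMulAut_bijective.1
    ext1 x
    have := MulEquiv.semidirectLeft_aut he (ofAdd 1) x
    rw [mul_inv_cancel_comm, glPhi_eq_glMulAut, glPhi_eq_glMulAut] at this
    simpa [hC] using this
  refine ⟨C, ?_⟩
  rw [hCA, mul_inv_cancel_right]
  rcases MonoidHom.toAdd_map_ofAdd_one_eq_one_or_neg_one (e.semidirectRight_surjective he)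
    with h | h
  · exact Or.inl (by rw [h, zpow_one])
  · exact Or.inr (by rw [h, zpow_neg_one])

end Gamma

end

/-- For hyperbolic `A, B ∈ GL_n(ℤ)`: `ℤⁿ ⋊_A ℤ ≅ ℤⁿ ⋊_B ℤ` iff `A` is conjugate in
`GL_n(ℤ)` to `B` or to `B⁻¹`. -/
theorem gamma_iso_iff_conj {n : ℕ} (A B : Matrix.GeneralLinearGroup (Fin n) ℤ)
    (hA : IsHyperbolic A) (hB : IsHyperbolic B) :
    Nonempty (Gamma A ≃* Gamma B) ↔
      ∃ C : Matrix.GeneralLinearGroup (Fin n) ℤ, C * A * C⁻¹ = B ∨ C * A * C⁻¹ = B⁻¹ := by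
  refine ⟨fun ⟨e⟩ ↦ ?_, fun ⟨C, h⟩ ↦ ?_⟩
  · rcases eq_or_ne n 0 with rfl | hn
    · exact ⟨1, Or.inl (Subsingleton.elim _ _)⟩
    · exact Gamma.exists_conj_of_mulEquiv hA hB hn e
  · rcases h with h | h
    · exact ⟨Gamma.mulEquivOfConj h⟩
    · exact ⟨(Gamma.mulEquivOfConj h).trans (Gamma.mulEquivInv B)⟩
end

section
/- Every free ℤ[ℤ/2ℤ]-module of finite rank whose underlying abelian group is free abelian decomposes as a direct sum of copies of the trivial module ℤ, the sign module ℤ₋ (where the generator acts by -1), and the regular module ℤ[ℤ/2ℤ]. -/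
/-!
Let `P = ker (τ + 1)` and `Q = range (τ + 1)`. As `Q` is free, `M ≅ P × Q`, and in these
coordinates `τ (p, q) = (φ q - p, q)` for a homomorphism `φ : Q → P`. Smith normal form makes `φ`
diagonal, which splits `M` into sign and trivial summands and `2 × 2` blocks
`(x, y) ↦ (a y - x, y)`. The shear `(x, y) ↦ (x - k y, y)` replaces `a` by `a - 2k`, so only the
parity of `a` matters: `a = 0` gives `ℤ₋ ⊕ ℤ` and `a = 1` gives the regular module.
-/

namespace InvolutionDecomposition

abbrev StdModel (a b c : ℕ) : Type := (Fin a → ℤ × ℤ) × (Fin b → ℤ) × (Fin c → ℤ)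

def stdInvolution {a b c : ℕ} (x : StdModel a b c) : StdModel a b c :=
  (fun i => (x.1 i).swap, x.2.1, fun i => -x.2.2 i)

def finAppendEquiv (X : Type*) [AddCommGroup X] (m n : ℕ) :
    (Fin m → X) × (Fin n → X) ≃+ (Fin (m + n) → X) :=
  ((LinearEquiv.sumArrowLequivProdArrow (Fin m) (Fin n) ℤ X).symm.trans
    (LinearEquiv.funCongrLeft ℤ X finSumFinEquiv.symm)).toAddEquiv

theorem finAppendEquiv_comp {X : Type*} [AddCommGroup X] {m n : ℕ} (g : X → X)
    (x : (Fin m → X) × (Fin n → X)) :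
    finAppendEquiv X m n (g ∘ x.1, g ∘ x.2) = g ∘ finAppendEquiv X m n x :=
  congrArg (· ∘ finSumFinEquiv.symm) (Sum.comp_elim g x.1 x.2).symm

def stdProdEquiv (a b c a' b' c' : ℕ) :
    StdModel a b c × StdModel a' b' c' ≃+ StdModel (a + a') (b + b') (c + c') :=
  (AddEquiv.prodProdProdComm _ _ _ _).trans <| AddEquiv.prodCongr (finAppendEquiv _ a a') <|
    (AddEquiv.prodProdProdComm _ _ _ _).trans <|
      AddEquiv.prodCongr (finAppendEquiv _ b b') (finAppendEquiv _ c c')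

theorem stdProdEquiv_stdInvolution {a b c a' b' c' : ℕ} (x : StdModel a b c)
    (y : StdModel a' b' c') :
    stdProdEquiv a b c a' b' c' (stdInvolution x, stdInvolution y) =
      stdInvolution (stdProdEquiv a b c a' b' c' (x, y)) :=
  Prod.ext (finAppendEquiv_comp Prod.swap (x.1, y.1))
    (Prod.ext rfl (finAppendEquiv_comp Neg.neg (x.2.2, y.2.2)))

def HasStdDecomposition (M : Type*) [AddCommGroup M] (τ : M → M) : Prop :=
  ∃ (a b c : ℕ) (e : M ≃+ StdModel a b c), ∀ x, e (τ x) = stdInvolution (e x)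

section Twist

variable {P Q P' Q' : Type*} [AddCommGroup P] [AddCommGroup Q] [AddCommGroup P']
  [AddCommGroup Q']

def twist (φ : Q → P) (x : P × Q) : P × Q := (φ x.2 - x.1, x.2)

theorem prodCongr_twist (α : P ≃+ P') (β : Q ≃+ Q') {φ : Q → P} {φ' : Q' → P'}
    (h : ∀ q, α (φ q) = φ' (β q)) (x : P × Q) :
    α.prodCongr β (twist φ x) = twist φ' (α.prodCongr β x) :=
  Prod.ext (show α (φ x.2 - x.1) = φ' (β x.2) - α x.1 by rw [map_sub, h]) rfl

theorem prodProdProdComm_twist (φ : Q → P) (φ' : Q' → P') (x : (P × P') × Q × Q') :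
    AddEquiv.prodProdProdComm P P' Q Q' (twist (Prod.map φ φ') x) =
      Prod.map (twist φ) (twist φ') (AddEquiv.prodProdProdComm P P' Q Q' x) :=
  rfl

def piProdEquiv (ι : Type*) (P Q : Type*) [AddCommGroup P] [AddCommGroup Q] :
    (ι → P) × (ι → Q) ≃+ (ι → P × Q) :=
  { (Equiv.arrowProdEquivProdArrow ι (fun _ => P) (fun _ => Q)).symm with
    map_add' := fun _ _ => rfl }

theorem piProdEquiv_twist {ι : Type*} (φ : ι → Q → P) (x : (ι → P) × (ι → Q)) :
    piProdEquiv ι P Q (twist (fun q i => φ i (q i)) x) =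
      fun i => twist (φ i) (piProdEquiv ι P Q x i) :=
  rfl

def shear (ψ : Q →+ P) : P × Q ≃+ P × Q where
  toFun x := (x.1 - ψ x.2, x.2)
  invFun x := (x.1 + ψ x.2, x.2)
  left_inv x := by simp
  right_inv x := by simp
  map_add' x y := Prod.ext (by simp only [Prod.fst_add, Prod.snd_add, map_add]; abel) rfl

theorem shear_twist (ψ : Q →+ P) (φ : Q → P) (x : P × Q) :
    shear ψ (twist φ x) = twist (fun q => φ q - 2 • ψ q) (shear ψ x) :=
  Prod.ext (by simp only [shear, twist, AddEquiv.coe_mk, Equiv.coe_fn_mk]; abel) rfl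

end Twist

section Splitting

variable {R M N : Type*} [Ring R] [AddCommGroup M] [Module R M] [AddCommGroup N] [Module R N]

theorem exists_linearEquiv_ker_prod (g : M →ₗ[R] N) (hg : Function.Surjective g)
    [Module.Projective R N] :
    ∃ e : M ≃ₗ[R] LinearMap.ker g × N, (∀ p : LinearMap.ker g, e p = (p, 0)) ∧
      ∀ x, (e x).2 = g x := by
  obtain ⟨l, hl⟩ := Module.projective_lifting_property g LinearMap.id hg
  let e := (LinearMap.exact_subtype_ker_map g).splitSurjectiveEquiv Subtype.val_injective ⟨l, hl⟩
  obtain ⟨hinl, hsnd⟩ := e.2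
  exact ⟨e.1, fun p => e.1.eq_symm_apply.mp (LinearMap.congr_fun hinl p),
    fun x => (LinearMap.congr_fun hsnd x).symm⟩

theorem exists_linearEquiv_twist (τ : M →ₗ[R] M) (g : M →ₗ[R] N) (hg : Function.Surjective g)
    [Module.Projective R N] (hgτ : ∀ x, g (τ x) = g x) (hτ : ∀ x ∈ LinearMap.ker g, τ x = -x) :
    ∃ (φ : N →ₗ[R] LinearMap.ker g) (e : M ≃ₗ[R] LinearMap.ker g × N),
      ∀ x, e (τ x) = twist φ (e x) := by
  obtain ⟨e, he_ker, he_snd⟩ := exists_linearEquiv_ker_prod g hg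
  refine ⟨LinearMap.fst R _ N ∘ₗ e.toLinearMap ∘ₗ τ ∘ₗ e.symm.toLinearMap ∘ₗ LinearMap.inr R _ N,
    e, fun x => ?_⟩
  obtain ⟨⟨p, n⟩, rfl⟩ := e.symm.surjective x
  have hsplit : e.symm (p, n) = p + e.symm (0, n) := by
    rw [← (e.symm_apply_eq).mpr (he_ker p).symm, ← map_add, Prod.mk_add_mk, add_zero, zero_add]
  have hsnd : (e (τ (e.symm (0, n)))).2 = n := by
    rw [he_snd, hgτ, ← he_snd, e.apply_symm_apply]
  rw [e.apply_symm_apply, hsplit, map_add, hτ p p.2, map_add, map_neg, he_ker]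
  refine Prod.ext ?_ ?_
  · simp [twist, neg_add_eq_sub]
  · simp [twist, hsnd]

end Splitting

section SmithNormalForm

variable {R : Type*} [CommRing R]

theorem _root_.Module.Basis.SmithNormalForm.exists_linearEquiv {M : Type*} [AddCommGroup M]
    [Module R M] {N : Submodule R M} {ι : Type*} [Finite ι] {r : ℕ}
    (snf : Module.Basis.SmithNormalForm N ι r) :
    ∃ (m : ℕ) (α : M ≃ₗ[R] (Fin r → R) × (Fin m → R)),
      ∀ x : N, α x = (snf.a * snf.bN.equivFun x, 0) := by
  classical
  let C := {i // i ∉ Set.range snf.f}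
  let σ : Fin r ⊕ C ≃ ι := (Equiv.sumCongr (Equiv.ofInjective snf.f snf.f.injective)
    (Equiv.refl C)).trans (Equiv.sumCompl (· ∈ Set.range snf.f))
  refine ⟨Nat.card C, snf.bM.equivFun ≪≫ₗ LinearEquiv.funCongrLeft R R σ ≪≫ₗ
    LinearEquiv.sumArrowLequivProdArrow _ _ R R ≪≫ₗ
    (LinearEquiv.refl R _).prodCongr (LinearEquiv.funCongrLeft R R (Finite.equivFin C).symm),
    fun x => Prod.ext (funext fun i => ?_) (funext fun j => ?_)⟩
  · change snf.bM.repr x (snf.f i) = snf.a i * snf.bN.repr x i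
    simp
  · exact snf.repr_eq_zero_of_notMem_range x ((Finite.equivFin C).symm j).2

theorem exists_linearEquiv_diagonal [IsDomain R] [IsPrincipalIdealRing R]
    {P Q : Type*} [AddCommGroup P] [Module R P] [AddCommGroup Q] [Module R Q]
    [Module.Free R P] [Module.Finite R P] [Module.Free R Q] [Module.Finite R Q]
    (φ : Q →ₗ[R] P) :
    ∃ (r m n : ℕ) (a : Fin r → R) (α : P ≃ₗ[R] (Fin r → R) × (Fin m → R))
      (β : Q ≃ₗ[R] (Fin r → R) × (Fin n → R)), ∀ q, α (φ q) = (a * (β q).1, 0) := by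
  obtain ⟨r, snf⟩ := (LinearMap.range φ).smithNormalForm (Module.Free.chooseBasis R P)
  obtain ⟨m, α, hα⟩ := snf.exists_linearEquiv
  obtain ⟨e, -, he⟩ := exists_linearEquiv_ker_prod φ.rangeRestrict φ.surjective_rangeRestrict
  refine ⟨r, m, _, snf.a, α, e ≪≫ₗ LinearEquiv.prodComm R _ _ ≪≫ₗ
    snf.bN.equivFun.prodCongr (Module.finBasis R _).equivFun, fun q => ?_⟩
  have hφ : φ q = (e q).2 := by rw [he]; rfl
  rw [hφ, hα]
  rfl

end SmithNormalForm

namespace HasStdDecomposition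

variable {M N : Type*} [AddCommGroup M] [AddCommGroup N]

theorem of_addEquiv {τ : M → M} {σ : N → N} (f : M ≃+ N) (hf : ∀ x, f (τ x) = σ (f x))
    (h : HasStdDecomposition N σ) : HasStdDecomposition M τ := by
  obtain ⟨a, b, c, e, he⟩ := h
  exact ⟨a, b, c, f.trans e, fun x => by simp [hf, he]⟩

theorem id_of_free (P : Type*) [AddCommGroup P] [Module.Free ℤ P] [Module.Finite ℤ P] :
    HasStdDecomposition P id :=
  ⟨0, _, 0, (Module.finBasis ℤ P).equivFun.toAddEquiv.trans
    (AddEquiv.uniqueProd.trans AddEquiv.prodUnique).symm,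
    fun _ => Prod.ext (Subsingleton.elim _ _) (Prod.ext rfl (Subsingleton.elim _ _))⟩

theorem neg_of_free (P : Type*) [AddCommGroup P] [Module.Free ℤ P] [Module.Finite ℤ P] :
    HasStdDecomposition P Neg.neg :=
  ⟨0, 0, _, (Module.finBasis ℤ P).equivFun.toAddEquiv.trans
    (AddEquiv.uniqueProd.trans AddEquiv.uniqueProd).symm,
    fun x => Prod.ext (Subsingleton.elim _ _) (Prod.ext (Subsingleton.elim _ _) (by
      ext i; simp [stdInvolution]))⟩

theorem swap : HasStdDecomposition (ℤ × ℤ) Prod.swap :=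
  ⟨1, 0, 0, (AddEquiv.funUnique (Fin 1) (ℤ × ℤ)).symm.trans
    (AddEquiv.prodAssoc.symm.trans (AddEquiv.prodUnique.trans AddEquiv.prodUnique)).symm,
    fun _ => Prod.ext rfl (Subsingleton.elim _ _)⟩

theorem prod {τ : M → M} {σ : N → N} (hM : HasStdDecomposition M τ)
    (hN : HasStdDecomposition N σ) : HasStdDecomposition (M × N) (Prod.map τ σ) := by
  obtain ⟨a, b, c, e, he⟩ := hM
  obtain ⟨a', b', c', e', he'⟩ := hN
  exact ⟨_, _, _, (e.prodCongr e').trans (stdProdEquiv a b c a' b' c'), fun x =>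
    (congrArg (stdProdEquiv a b c a' b' c') (Prod.ext (he x.1) (he' x.2))).trans
      (stdProdEquiv_stdInvolution _ _)⟩

theorem pi {ι : Type*} [Finite ι] {τ : ι → M → M} (h : ∀ i, HasStdDecomposition M (τ i)) :
    HasStdDecomposition (ι → M) (fun x i => τ i (x i)) := by
  refine Finite.induction_empty_option (P := fun ι => ∀ τ : ι → M → M,
    (∀ i, HasStdDecomposition M (τ i)) → HasStdDecomposition (ι → M) (fun x i => τ i (x i)))
    ?_ ?_ ?_ ι τ h
  · intro α β e hα τ h
    exact of_addEquiv (LinearEquiv.funCongrLeft ℤ M e).toAddEquiv (fun x => rfl)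
      (hα _ fun i => h (e i))
  · intro τ _
    exact of_addEquiv (AddEquiv.refl _) (fun _ => Subsingleton.elim _ _) (id_of_free _)
  · intro α _ hα τ h
    exact of_addEquiv (LinearEquiv.piOptionEquivProd ℤ).toAddEquiv (fun x => rfl)
      ((h none).prod (hα _ fun i => h (some i)))

theorem twist_zero (P Q : Type*) [AddCommGroup P] [AddCommGroup Q] [Module.Free ℤ P]
    [Module.Finite ℤ P] [Module.Free ℤ Q] [Module.Finite ℤ Q] :
    HasStdDecomposition (P × Q) (twist 0) :=
  of_addEquiv (σ := Prod.map Neg.neg id) (AddEquiv.refl _) (fun x => Prod.ext (zero_sub x.1) rfl)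
    ((neg_of_free P).prod (id_of_free Q))

theorem twist_mul (a : ℤ) : HasStdDecomposition (ℤ × ℤ) (twist (a * ·)) := by
  have hparity : HasStdDecomposition (ℤ × ℤ) (twist (a % 2 * ·)) := by
    rcases Int.emod_two_eq_zero_or_one a with h | h <;> rw [h]
    · convert twist_zero ℤ ℤ using 2
      exact funext zero_mul
    · -- `(x, y) ↦ (x, y - x)` carries `(y - x, y)` to the swap of its image
      refine of_addEquiv
        (LinearEquiv.skewProd (.refl ℤ ℤ) (.refl ℤ ℤ) (-LinearMap.id)).toAddEquiv
        (fun x => ?_) swap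
      simp [twist, LinearEquiv.skewProd_apply, sub_eq_add_neg]
  refine of_addEquiv (shear (AddMonoidHom.mulLeft (a / 2))) (shear_twist _ _) ?_
  convert hparity using 3 with q
  simp only [AddMonoidHom.coe_mulLeft, Int.emod_def]
  ring

theorem twist_diag {ι : Type*} [Finite ι] (a : ι → ℤ) :
    HasStdDecomposition ((ι → ℤ) × (ι → ℤ)) (twist (a * ·)) :=
  of_addEquiv (piProdEquiv ι ℤ ℤ) (piProdEquiv_twist (fun i => (a i * ·)))
    (pi fun i => twist_mul (a i))

theorem twist_of_free {P Q : Type*} [AddCommGroup P] [AddCommGroup Q]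
    [Module.Free ℤ P] [Module.Finite ℤ P] [Module.Free ℤ Q] [Module.Finite ℤ Q]
    (φ : Q →ₗ[ℤ] P) : HasStdDecomposition (P × Q) (twist φ) := by
  obtain ⟨r, m, n, a, α, β, hφ⟩ := exists_linearEquiv_diagonal φ
  refine of_addEquiv (α.toAddEquiv.prodCongr β.toAddEquiv)
    (prodCongr_twist (φ' := Prod.map (a * ·) 0) _ _ hφ) ?_
  exact of_addEquiv _ (prodProdProdComm_twist _ _) ((twist_diag a).prod (twist_zero _ _))

end HasStdDecomposition

end InvolutionDecomposition

open InvolutionDecomposition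

/-- Every finite-rank free abelian group with an involution (i.e. every
`ℤ[ℤ/2ℤ]`-module that is free as an abelian group) decomposes as a direct sum of
copies of the regular module `ℤ[ℤ/2ℤ]` (coordinates swapped), the trivial module `ℤ`,
and the sign module `ℤ₋` (involution acting by `-1`). -/
theorem involution_module_decomposition (M : Type*) [AddCommGroup M]
    [Module.Free ℤ M] [Module.Finite ℤ M] (τ : M ≃+ M) (hτ : ∀ x, τ (τ x) = x) :
    ∃ (a b c : ℕ) (e : M ≃+ (Fin a → ℤ × ℤ) × (Fin b → ℤ) × (Fin c → ℤ)),
      ∀ x : M, e (τ x) =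
        (fun i => ((e x).1 i).swap, (e x).2.1, fun i => -((e x).2.2 i)) := by
  let T : M →ₗ[ℤ] M := τ.toAddMonoidHom.toIntLinearMap
  obtain ⟨φ, e, he⟩ :=
    exists_linearEquiv_twist T (T + 1).rangeRestrict (T + 1).surjective_rangeRestrict
    (fun x => Subtype.ext <| show τ (τ x) + τ x = τ x + x by rw [hτ, add_comm])
    (fun x hx => eq_neg_of_add_eq_zero_left (congrArg Subtype.val hx))
  exact (HasStdDecomposition.twist_of_free φ).of_addEquiv e.toAddEquiv he
end
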